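/- With $T$, $e$, $q$, $D$, $R$ as in the quasi-Taylor expansion assumption (T invariant under $G_X$, $T(e+h) = T(e) + D(h) + R(h)$, $D$ homogeneous of degree $q$, $R(h)/\|h\|^q \to 0$): if $D(h) < 0$ for every $h \in \mathrm{span}(e)^{\perp}$ with $h \neq 0$, then there exists a neighborhood of $e$ in $\mathbb{R}^n$ on which $T(y) \leq T(e)$ holds. -/

import Mathlib

/-!
Let `c > 0` bound `-D` from below on the compact set of unit vectors orthogonal to `e`
(`D < 0` there). By homogeneity `D h ≤ -c ‖h‖ ^ q` for every `h ⊥ e`, and this dominates the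
remainder `R h = o(‖h‖ ^ q)`, so `T (e + h) ≤ T e` for all small `h ⊥ e`. A point `y` near `e`
has `y ⬝ᵥ e ≠ 0`, and `(y ⬝ᵥ e)⁻¹ • y = e + h` with `h ⊥ e` small; since `T` is invariant
under nonzero scalings, `T y = T (e + h) ≤ T e`.
-/

open Matrix Filter Topology

theorem MvPolynomial.IsHomogeneous.eval_smul {σ R : Type*} [CommSemiring R]
    {φ : MvPolynomial σ R} {n : ℕ} (hφ : φ.IsHomogeneous n) (t : R) (x : σ → R) :
    MvPolynomial.eval (t • x) φ = t ^ n * MvPolynomial.eval x φ := by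
  rw [MvPolynomial.eval_eq, MvPolynomial.eval_eq, Finset.mul_sum]
  refine Finset.sum_congr rfl fun d hd => ?_
  simp only [Pi.smul_apply, smul_eq_mul, mul_pow, Finset.prod_mul_distrib,
    Finset.prod_pow_eq_pow_sum, ← hφ.degree_eq_sum_deg_support hd]
  ring

section

variable {E : Type*} [NormedAddCommGroup E] [NormedSpace ℝ E] [FiniteDimensional ℝ E]
  {f R : E → ℝ} {q : ℕ} {V : Submodule ℝ E}

theorem exists_pos_le_neg_mul_norm_pow (hf : Continuous f)
    (hhom : ∀ t : ℝ, 0 < t → ∀ x, f (t • x) = t ^ q * f x)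
    (hneg : ∀ x ∈ V, x ≠ 0 → f x < 0) :
    ∃ c > 0, ∀ x ∈ V, x ≠ 0 → f x ≤ -c * ‖x‖ ^ q := by
  have hK : IsCompact (Metric.sphere (0 : E) 1 ∩ V) :=
    (isCompact_sphere 0 1).inter_right V.closed_of_finiteDimensional
  obtain ⟨c, hc, hcK⟩ := hK.exists_forall_le' (f := fun x => -f x) hf.neg.continuousOn
    (a := 0) fun u ⟨hu, huV⟩ => neg_pos.2 <| hneg u huV <| ne_zero_of_mem_unit_sphere ⟨u, hu⟩
  refine ⟨c, hc, fun x hxV hx => ?_⟩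
  have hxpos : 0 < ‖x‖ := norm_pos_iff.2 hx
  have hu : ‖x‖⁻¹ • x ∈ Metric.sphere (0 : E) 1 ∩ V :=
    ⟨by simp [norm_smul, hxpos.ne'], V.smul_mem _ hxV⟩
  calc f x = ‖x‖ ^ q * f (‖x‖⁻¹ • x) := by
        rw [← hhom _ hxpos, smul_smul, mul_inv_cancel₀ hxpos.ne', one_smul]
    _ ≤ ‖x‖ ^ q * -c := by gcongr; linarith [hcK _ hu]
    _ = -c * ‖x‖ ^ q := by ring

theorem eventually_add_neg_of_tendsto_div_norm_pow (hf : Continuous f)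
    (hhom : ∀ t : ℝ, 0 < t → ∀ x, f (t • x) = t ^ q * f x)
    (hneg : ∀ x ∈ V, x ≠ 0 → f x < 0)
    (hR : Tendsto (fun h => R h / ‖h‖ ^ q) (𝓝[≠] 0) (𝓝 0)) :
    ∀ᶠ h in 𝓝[≠] 0, h ∈ V → f h + R h < 0 := by
  obtain ⟨c, hc, hfc⟩ := exists_pos_le_neg_mul_norm_pow hf hhom hneg
  filter_upwards [hR.eventually (gt_mem_nhds hc), self_mem_nhdsWithin] with h hRh hh hhV
  have hpos : 0 < ‖h‖ ^ q := pow_pos (norm_pos_iff.2 hh) q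
  linarith [(div_lt_iff₀ hpos).1 hRh, hfc h hhV hh]

end

theorem ContinuousLinearEquiv.map_nhdsNE_zero {E F : Type*} [AddCommGroup E] [Module ℝ E]
    [TopologicalSpace E] [AddCommGroup F] [Module ℝ F] [TopologicalSpace F] (g : E ≃L[ℝ] F) :
    map g (𝓝[≠] 0) = 𝓝[≠] 0 := by
  simpa using g.toHomeomorph.map_punctured_nhds_eq 0

theorem eventually_add_neg_of_tendsto_div_sqrt_sum_sq {ι : Type*} [Fintype ι]
    {f R : (ι → ℝ) → ℝ} {q : ℕ} {V : Submodule ℝ (ι → ℝ)} (hf : Continuous f)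
    (hhom : ∀ t : ℝ, 0 < t → ∀ x, f (t • x) = t ^ q * f x)
    (hneg : ∀ x ∈ V, x ≠ 0 → f x < 0)
    (hR : Tendsto (fun h => R h / √(∑ i, h i ^ 2) ^ q) (𝓝[≠] 0) (𝓝 0)) :
    ∀ᶠ h in 𝓝[≠] 0, h ∈ V → f h + R h < 0 := by
  -- `ι → ℝ` carries the sup norm, so the argument is run in `EuclideanSpace ℝ ι`.
  let L := EuclideanSpace.equiv ι ℝ
  have hnorm (x : EuclideanSpace ℝ ι) : ‖x‖ = √(∑ i, L x i ^ 2) := by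
    simp [L, EuclideanSpace.norm_eq]
  have hRL : Tendsto (fun x => R (L x) / ‖x‖ ^ q) (𝓝[≠] 0) (𝓝 0) := by
    simp_rw [hnorm]
    exact hR.comp (L.map_nhdsNE_zero ▸ tendsto_map)
  rw [← L.map_nhdsNE_zero, eventually_map]
  exact eventually_add_neg_of_tendsto_div_norm_pow (V := V.comap (L : _ →ₗ[ℝ] _))
    (hf.comp L.continuous) (fun t ht x => by simp [hhom t ht])
    (fun x hx hx0 => hneg (L x) hx (by simpa using hx0)) hRL

theorem Filter.Eventually.nhds_of_smul_invariant {E : Type*} [AddCommGroup E] [Module ℝ E]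
    [TopologicalSpace E] [IsTopologicalAddGroup E] [ContinuousSMul ℝ E] {P : E → Prop}
    (hP : ∀ γ : ℝ, γ ≠ 0 → ∀ y, P (γ • y) → P y) (ℓ : E →L[ℝ] ℝ) {e : E} (hℓe : ℓ e = 1)
    (h : ∀ᶠ h in 𝓝 0, ℓ h = 0 → P (e + h)) : ∀ᶠ y in 𝓝 e, P y := by
  have hℓ : ∀ᶠ y in 𝓝 e, ℓ y ≠ 0 :=
    ℓ.continuous.continuousAt.eventually_ne (by simp [hℓe])
  have hg : ContinuousAt (fun y => (ℓ y)⁻¹ • y - e) e :=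
    (((ℓ.continuous.continuousAt).inv₀ (by simp [hℓe])).smul continuousAt_id).sub
      continuousAt_const
  replace hg : Tendsto (fun y => (ℓ y)⁻¹ • y - e) (𝓝 e) (𝓝 0) := by
    simpa [ContinuousAt, hℓe] using hg
  filter_upwards [hg.eventually h, hℓ] with y hy hy0
  refine hP (ℓ y)⁻¹ (inv_ne_zero hy0) y ?_
  simpa using hy (by simp [hy0, hℓe])

theorem stmt9_general {n k : ℕ}
    (X : Matrix (Fin n) (Fin k) ℝ)
    (T : (Fin n → ℝ) → ℝ)
    (hTinv : ∀ γ : ℝ, γ ≠ 0 → ∀ (θ : Fin k → ℝ) (y : Fin n → ℝ),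
      T (γ • y + X.mulVec θ) = T y)
    (e : Fin n → ℝ) (he : ∑ i, e i ^ 2 = 1)
    (q : ℕ)
    (D : (Fin n → ℝ) → ℝ)
    (p : MvPolynomial (Fin n) ℝ) (hp : p.IsHomogeneous q)
    (hD : ∀ h : Fin n → ℝ, D h = MvPolynomial.eval h p)
    (R : (Fin n → ℝ) → ℝ)
    (hTay : ∀ h : Fin n → ℝ, T (e + h) = T e + D h + R h)
    (hR : Tendsto (fun h : Fin n → ℝ => R h / (Real.sqrt (∑ i, h i ^ 2)) ^ q)
      (nhdsWithin 0 {(0 : Fin n → ℝ)}ᶜ) (nhds 0))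
    (hDneg : ∀ h : Fin n → ℝ, h ≠ 0 → h ⬝ᵥ e = 0 → D h < 0) :
    ∃ U ∈ nhds e, ∀ y ∈ U, T y ≤ T e := by
  have hDc : Continuous D := funext hD ▸ MvPolynomial.continuous_eval p
  let ℓ : (Fin n → ℝ) →L[ℝ] ℝ := LinearMap.toContinuousLinearMap ((dotProductBilin ℝ ℝ).flip e)
  have hℓe : ℓ e = 1 := by simpa [ℓ, dotProduct, sq] using he
  have hlocal : ∀ᶠ h in 𝓝[≠] 0, ℓ h = 0 → D h + R h < 0 :=
    eventually_add_neg_of_tendsto_div_sqrt_sum_sq (V := LinearMap.ker ℓ.toLinearMap) hDc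
      (fun t _ x => by rw [hD, hD, hp.eval_smul]) (fun h hh hh0 => hDneg h hh0 hh) hR
  have hnear : ∀ᶠ h in 𝓝 0, ℓ h = 0 → T (e + h) ≤ T e := by
    filter_upwards [eventually_nhdsWithin_iff.1 hlocal] with h hh hℓh
    rcases eq_or_ne h 0 with rfl | hh0
    · simp
    · linarith [hTay h, hh hh0 hℓh]
  have hscale (γ : ℝ) (hγ : γ ≠ 0) (y : Fin n → ℝ) : T (γ • y) = T y := by
    simpa using hTinv γ hγ 0 y
  exact ⟨_, hnear.nhds_of_smul_invariant (fun γ hγ y => (hscale γ hγ y).ge.trans) ℓ hℓe,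
    fun _ hy => hy⟩

/-- If a `G_X`-invariant test statistic `T` admits the quasi-Taylor expansion
`T(e+h) = T(e) + D(h) + R(h)` with `D` a homogeneous polynomial of degree `q`,
`R(h)/‖h‖^q → 0`, and `D(h) < 0` for every nonzero `h ⊥ e`, then `T(y) ≤ T(e)` on a
neighborhood of `e`. -/
theorem stmt9 {n k : ℕ} (hn : 2 ≤ n) (hk : k < n)
    (X : Matrix (Fin n) (Fin k) ℝ)
    (T : (Fin n → ℝ) → ℝ)
    (hTinv : ∀ γ : ℝ, γ ≠ 0 → ∀ (θ : Fin k → ℝ) (y : Fin n → ℝ),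
      T (γ • y + X.mulVec θ) = T y)
    (e : Fin n → ℝ) (he : ∑ i, e i ^ 2 = 1)
    (q : ℕ) (hq : 0 < q)
    (D : (Fin n → ℝ) → ℝ)
    (p : MvPolynomial (Fin n) ℝ) (hp : p.IsHomogeneous q)
    (hD : ∀ h : Fin n → ℝ, D h = MvPolynomial.eval h p)
    (R : (Fin n → ℝ) → ℝ)
    (hTay : ∀ h : Fin n → ℝ, T (e + h) = T e + D h + R h)
    (hR : Tendsto (fun h : Fin n → ℝ => R h / (Real.sqrt (∑ i, h i ^ 2)) ^ q)
      (nhdsWithin 0 {(0 : Fin n → ℝ)}ᶜ) (nhds 0))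
    (hDneg : ∀ h : Fin n → ℝ, h ≠ 0 → h ⬝ᵥ e = 0 → D h < 0) :
    ∃ U ∈ nhds e, ∀ y ∈ U, T y ≤ T e :=
  stmt9_general X T hTinv e he q D p hp hD R hTay hR hDneg
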